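/- Let G : ℝ × ℝ → ℝ be smooth, let φ : ℝⁿ → ℝ be a smooth solution of □_η φ = G(φ, u) where u := Σ_{c,d} η^{cd} ∂_c φ ∂_d φ, and let K(x) = A x + b be an affine η-Killing field. Then ψ := Kφ (that is, ψ(x) = Σ_a K^a(x) ∂_a φ(x)) satisfies the linear homogeneous wave equation □_η ψ = (∂₁G)(φ, u) · ψ + 2 (∂₂G)(φ, u) · Σ_{c,d} η^{cd} ∂_c φ ∂_d ψ at every point, where ∂₁G and ∂₂G denote the partial derivatives of G with respect to its first and second argument. (This is the paper's evolution equation (3.12) for 𝓛_K 𝒯, with a matter source depending on the field and its first derivatives through the metric, specialized to a scalar field on flat spacetime.) -/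

import Mathlib

/-- Partial derivative of a scalar field on ℝⁿ in the `a`-th coordinate direction. -/
noncomputable def pd {n : ℕ} (a : Fin n) (u : (Fin n → ℝ) → ℝ) : (Fin n → ℝ) → ℝ :=
  fun x => fderiv ℝ u x (Pi.single a 1)

/-- The η-d'Alembertian `□_η u := Σ_{a,b} η^{ab} ∂_a ∂_b u`. -/
noncomputable def box {n : ℕ} (η : Matrix (Fin n) (Fin n) ℝ)
    (u : (Fin n → ℝ) → ℝ) : (Fin n → ℝ) → ℝ :=
  fun x => ∑ a, ∑ b, η⁻¹ a b * pd a (pd b u) x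

/-- The bilinear form `η(v,w) = Σ_{a,b} η_{ab} v^a w^b`. -/
noncomputable def bform {n : ℕ} (η : Matrix (Fin n) (Fin n) ℝ)
    (v w : Fin n → ℝ) : ℝ :=
  ∑ a, ∑ b, η a b * v a * w b

lemma pd_contDiff {n : ℕ} (a : Fin n) {f : (Fin n → ℝ) → ℝ} (hf : ContDiff ℝ (⊤ : ℕ∞) f) :
    ContDiff ℝ (⊤ : ℕ∞) (pd a f) := by
  unfold pd
  exact (hf.fderiv_right (by simp)).clm_apply contDiff_const

lemma pd_sum {n : ℕ} (a : Fin n) {ι : Type*} (s : Finset ι)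
    (f : ι → (Fin n → ℝ) → ℝ) (hf : ∀ i, ContDiff ℝ (⊤ : ℕ∞) (f i)) (x : Fin n → ℝ) :
    pd a (fun y => ∑ i ∈ s, f i y) x = ∑ i ∈ s, pd a (f i) x := by
  unfold pd
  rw [fderiv_fun_sum (fun i _ => (hf i).differentiable (by simp) x)]
  simp

lemma pd_mul {n : ℕ} (a : Fin n) {f g : (Fin n → ℝ) → ℝ}
    (hf : ContDiff ℝ (⊤ : ℕ∞) f) (hg : ContDiff ℝ (⊤ : ℕ∞) g) (x : Fin n → ℝ) :
    pd a (fun y => f y * g y) x = pd a f x * g x + f x * pd a g x := by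
  unfold pd
  rw [fderiv_fun_mul (hf.differentiable (by simp) x) (hg.differentiable (by simp) x)]
  simp only [ContinuousLinearMap.add_apply, ContinuousLinearMap.smul_apply, smul_eq_mul]; ring

lemma pd_const_mul {n : ℕ} (a : Fin n) (c : ℝ) {f : (Fin n → ℝ) → ℝ}
    (hf : ContDiff ℝ (⊤ : ℕ∞) f) (x : Fin n → ℝ) :
    pd a (fun y => c * f y) x = c * pd a f x := by
  unfold pd
  rw [fderiv_const_mul (hf.differentiable (by simp) x)]
  simp

lemma pd_swap {n : ℕ} (a e : Fin n) {f : (Fin n → ℝ) → ℝ} (hf : ContDiff ℝ (⊤ : ℕ∞) f)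
    (x : Fin n → ℝ) : pd a (pd e f) x = pd e (pd a f) x := by
  have hsymm : IsSymmSndFDerivAt ℝ f x := by
    refine (hf.contDiffAt).isSymmSndFDerivAt ?_
    rw [minSmoothness_of_isRCLikeNormedField]
    exact WithTop.coe_le_coe.mpr le_top
  have hd : DifferentiableAt ℝ (fderiv ℝ f) x :=
    ((hf.fderiv_right (m := (⊤ : ℕ∞)) (by simp)).differentiable (by simp)) x
  have h1 : ∀ (v w : Fin n → ℝ),
      fderiv ℝ (fun y => fderiv ℝ f y w) x v = fderiv ℝ (fderiv ℝ f) x v w := by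
    intro v w
    rw [fderiv_clm_apply hd (differentiableAt_const w)]
    simp
  unfold pd
  rw [h1, h1, hsymm]

lemma affine_coord_hasFDeriv {n : ℕ} (A : (Fin n → ℝ) →ₗ[ℝ] (Fin n → ℝ)) (b : Fin n → ℝ)
    (e : Fin n) (x : Fin n → ℝ) :
    HasFDerivAt (fun y => A y e + b e)
      ((ContinuousLinearMap.proj e).comp (LinearMap.toContinuousLinearMap A)) x := by
  have h := (((ContinuousLinearMap.proj (R := ℝ) (φ := fun _ : Fin n => ℝ) e).comp
      (LinearMap.toContinuousLinearMap A)).hasFDerivAt (x := x)).add_const (b e)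
  exact h

lemma pd_affine_coord {n : ℕ} (A : (Fin n → ℝ) →ₗ[ℝ] (Fin n → ℝ)) (b : Fin n → ℝ)
    (d e : Fin n) (x : Fin n → ℝ) :
    pd d (fun y => A y e + b e) x = A (Pi.single d 1) e := by
  unfold pd
  rw [(affine_coord_hasFDeriv A b e x).fderiv]
  simp

lemma affine_coord_contDiff {n : ℕ} (A : (Fin n → ℝ) →ₗ[ℝ] (Fin n → ℝ)) (b : Fin n → ℝ)
    (e : Fin n) : ContDiff ℝ (⊤ : ℕ∞) (fun y => A y e + b e) := by
  have : (fun y => A y e + b e) = fun y =>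
      ((ContinuousLinearMap.proj e).comp (LinearMap.toContinuousLinearMap A)) y + b e := by
    funext y; simp
  rw [this]
  exact (((ContinuousLinearMap.proj (R := ℝ) (φ := fun _ : Fin n => ℝ) e).comp
      (LinearMap.toContinuousLinearMap A)).contDiff).add contDiff_const

lemma trace_antisym_sym {n : ℕ} (P H : Fin n → Fin n → ℝ)
    (hP : ∀ i j, P i j = - P j i) (hH : ∀ i j, H i j = H j i) :
    ∑ i, ∑ j, P i j * H i j = 0 := by
  have h : (∑ i, ∑ j, P i j * H i j) = - ∑ i, ∑ j, P i j * H i j := by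
    calc (∑ i, ∑ j, P i j * H i j) = ∑ j, ∑ i, P i j * H i j := Finset.sum_comm
    _ = ∑ j, ∑ i, -(P j i * H j i) := by
        refine Finset.sum_congr rfl fun j _ => Finset.sum_congr rfl fun i _ => ?_
        rw [hP i j, hH i j]; ring
    _ = - ∑ i, ∑ j, P i j * H i j := by simp
  linarith

lemma pd_comp2 {n : ℕ} (e : Fin n) (G : ℝ → ℝ → ℝ)
    (hG : ContDiff ℝ (⊤ : ℕ∞) (fun p : ℝ × ℝ => G p.1 p.2))
    {φ u : (Fin n → ℝ) → ℝ} (hφ : ContDiff ℝ (⊤ : ℕ∞) φ) (hu : ContDiff ℝ (⊤ : ℕ∞) u) (x : Fin n → ℝ) :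
    pd e (fun y => G (φ y) (u y)) x =
      fderiv ℝ (fun p : ℝ × ℝ => G p.1 p.2) (φ x, u x) (1, 0) * pd e φ x
      + fderiv ℝ (fun p : ℝ × ℝ => G p.1 p.2) (φ x, u x) (0, 1) * pd e u x := by
  set F : ℝ × ℝ → ℝ := fun p => G p.1 p.2 with hF
  have hpair : HasFDerivAt (fun y => (φ y, u y))
      ((fderiv ℝ φ x).prod (fderiv ℝ u x)) x :=
    ((hφ.differentiable (by simp) x).hasFDerivAt).prodMk ((hu.differentiable (by simp) x).hasFDerivAt)
  have hFd : HasFDerivAt F (fderiv ℝ F (φ x, u x)) (φ x, u x) :=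
    (hG.differentiable (by simp) (φ x, u x)).hasFDerivAt
  have hcomp := hFd.comp x hpair
  have : pd e (fun y => G (φ y) (u y)) x =
      fderiv ℝ F (φ x, u x) (pd e φ x, pd e u x) := by
    unfold pd
    have heq : (fun y => G (φ y) (u y)) = F ∘ fun y => (φ y, u y) := rfl
    rw [heq, hcomp.fderiv]
    rfl
  rw [this]
  have hdecomp : (pd e φ x, pd e u x) =
      pd e φ x • ((1 : ℝ), (0 : ℝ)) + pd e u x • ((0 : ℝ), (1 : ℝ)) := by
    simp [Prod.ext_iff]
  rw [hdecomp, map_add, map_smul, map_smul, smul_eq_mul, smul_eq_mul]; ring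

open Matrix in
lemma key_antisym {n : ℕ} (η M : Matrix (Fin n) (Fin n) ℝ) (hsym : η.IsSymm)
    (hinv : IsUnit η.det) (h : Mᵀ * η + η * M = 0) :
    ∀ i j, (η⁻¹ * Mᵀ) i j = -((η⁻¹ * Mᵀ) j i) := by
  have h2 : η⁻¹ * Mᵀ = -(M * η⁻¹) := by
    have h1 : Mᵀ * η = -(η * M) := by
      rw [eq_neg_iff_add_eq_zero]; exact h
    calc η⁻¹ * Mᵀ = η⁻¹ * (Mᵀ * η) * η⁻¹ := by
          rw [Matrix.mul_assoc, Matrix.mul_assoc, Matrix.mul_nonsing_inv _ hinv,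
            Matrix.mul_one]
      _ = η⁻¹ * (-(η * M)) * η⁻¹ := by rw [h1]
      _ = -(η⁻¹ * η * M * η⁻¹) := by noncomm_ring
      _ = -(M * η⁻¹) := by rw [Matrix.nonsing_inv_mul _ hinv, Matrix.one_mul]

  intro i j
  have ht : (η⁻¹ * Mᵀ)ᵀ = -(η⁻¹ * Mᵀ) := by
    rw [Matrix.transpose_mul, Matrix.transpose_transpose, Matrix.transpose_nonsing_inv,
      hsym.eq, h2]
    simp
  have := congrFun (congrFun ht j) i
  simp only [Matrix.transpose_apply, Matrix.neg_apply] at this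
  linarith

lemma pd_add {n : ℕ} (a : Fin n) {f g : (Fin n → ℝ) → ℝ}
    (hf : ContDiff ℝ (⊤ : ℕ∞) f) (hg : ContDiff ℝ (⊤ : ℕ∞) g) (x : Fin n → ℝ) :
    pd a (fun y => f y + g y) x = pd a f x + pd a g x := by
  unfold pd
  rw [fderiv_fun_add (hf.differentiable (by simp) x) (hg.differentiable (by simp) x)]
  simp

lemma key_vanish {n : ℕ} (Q Mm H' : Fin n → Fin n → ℝ)
    (hH' : ∀ a e, H' a e = H' e a)
    (hP : ∀ i j, (∑ d, Q i d * Mm j d) = -(∑ d, Q j d * Mm i d)) :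
    (∑ a, ∑ d, ∑ e, Q a d * (Mm e d * H' a e)) = 0 := by
  have h : (∑ a, ∑ d, ∑ e, Q a d * (Mm e d * H' a e))
      = ∑ a, ∑ e, (∑ d, Q a d * Mm e d) * H' a e := by
    refine Finset.sum_congr rfl fun a _ => ?_
    rw [Finset.sum_comm]
    refine Finset.sum_congr rfl fun e _ => ?_
    rw [Finset.sum_mul]
    exact Finset.sum_congr rfl fun d _ => by ring
  rw [h]
  exact trace_antisym_sym _ _ (fun i j => by rw [hP]) hH'

lemma algebra1 {n : ℕ} (Q Mm H : Fin n → Fin n → ℝ) (c : Fin n → ℝ)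
    (T : Fin n → Fin n → Fin n → ℝ)
    (hQ : ∀ a d, Q a d = Q d a) (hH : ∀ a e, H a e = H e a)
    (hP : ∀ i j, (∑ d, Q i d * Mm j d) = -(∑ d, Q j d * Mm i d)) :
    ∑ a, ∑ d, Q a d * ∑ e, (Mm e d * H a e + Mm e a * H d e + c e * T a d e)
      = ∑ e, c e * ∑ a, ∑ d, Q a d * T a d e := by
  have hsplit : ∑ a, ∑ d, Q a d * ∑ e, (Mm e d * H a e + Mm e a * H d e + c e * T a d e)
      = (∑ a, ∑ d, ∑ e, Q a d * (Mm e d * H a e))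
        + (∑ a, ∑ d, ∑ e, Q a d * (Mm e a * H d e))
        + (∑ a, ∑ d, ∑ e, Q a d * (c e * T a d e)) := by
    simp only [Finset.mul_sum, mul_add, Finset.sum_add_distrib]
  rw [hsplit]
  rw [key_vanish Q Mm H hH hP]
  have h2 : (∑ a, ∑ d, ∑ e, Q a d * (Mm e a * H d e))
      = ∑ a, ∑ d, ∑ e, Q a d * (Mm e d * H a e) := by
    rw [Finset.sum_comm]
    refine Finset.sum_congr rfl fun a _ => Finset.sum_congr rfl fun d _ =>
      Finset.sum_congr rfl fun e _ => ?_
    rw [hQ d a]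
  rw [h2, key_vanish Q Mm H hH hP]
  have h3 : (∑ a, ∑ d, ∑ e, Q a d * (c e * T a d e))
      = ∑ e, c e * ∑ a, ∑ d, Q a d * T a d e := by
    calc (∑ a, ∑ d, ∑ e, Q a d * (c e * T a d e))
        = ∑ a, ∑ e, ∑ d, Q a d * (c e * T a d e) :=
          Finset.sum_congr rfl fun a _ => Finset.sum_comm
      _ = ∑ e, ∑ a, ∑ d, Q a d * (c e * T a d e) := Finset.sum_comm
      _ = ∑ e, c e * ∑ a, ∑ d, Q a d * T a d e := by
          refine Finset.sum_congr rfl fun e _ => ?_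
          rw [Finset.mul_sum]
          refine Finset.sum_congr rfl fun a _ => ?_
          rw [Finset.mul_sum]
          exact Finset.sum_congr rfl fun d _ => by ring
  rw [h3]
  ring

lemma algebra3 {n : ℕ} (Q : Fin n → Fin n → ℝ) (g H2 : Fin n → ℝ)
    (hQ : ∀ a d, Q a d = Q d a) :
    ∑ c, ∑ d, (Q c d * H2 c * g d + Q c d * g c * H2 d)
      = 2 * ∑ c, ∑ d, Q c d * g c * H2 d := by
  have h1 : ∑ c, ∑ d, Q c d * H2 c * g d = ∑ c, ∑ d, Q c d * g c * H2 d := by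
    rw [Finset.sum_comm]
    exact Finset.sum_congr rfl fun d _ => Finset.sum_congr rfl fun c _ => by rw [hQ c d]; ring
  calc ∑ c, ∑ d, (Q c d * H2 c * g d + Q c d * g c * H2 d)
      = (∑ c, ∑ d, Q c d * H2 c * g d) + ∑ c, ∑ d, Q c d * g c * H2 d := by
        simp only [Finset.sum_add_distrib]
    _ = 2 * ∑ c, ∑ d, Q c d * g c * H2 d := by rw [h1]; ring

lemma algebra2 {n : ℕ} (Q Mm H : Fin n → Fin n → ℝ) (c g : Fin n → ℝ)
    (hH : ∀ a e, H a e = H e a)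
    (hP : ∀ i j, (∑ d, Q i d * Mm j d) = -(∑ d, Q j d * Mm i d)) :
    (∑ e, c e * (2 * ∑ p, ∑ d, Q p d * g p * H e d))
      = 2 * ∑ p, ∑ d, Q p d * g p * (∑ e, (Mm e d * g e + c e * H d e)) := by
  have hR : ∑ p, ∑ d, Q p d * g p * (∑ e, (Mm e d * g e + c e * H d e))
      = ∑ p, ∑ d, ∑ e, c e * (Q p d * g p * H d e) := by
    calc ∑ p, ∑ d, Q p d * g p * (∑ e, (Mm e d * g e + c e * H d e))
        = ∑ p, ∑ d, ∑ e, (Q p d * (Mm e d * (g p * g e)) + c e * (Q p d * g p * H d e)) := by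
          refine Finset.sum_congr rfl fun p _ => Finset.sum_congr rfl fun d _ => ?_
          rw [Finset.mul_sum]
          exact Finset.sum_congr rfl fun e _ => by ring
      _ = (∑ p, ∑ d, ∑ e, Q p d * (Mm e d * (g p * g e)))
          + ∑ p, ∑ d, ∑ e, c e * (Q p d * g p * H d e) := by
          simp only [Finset.sum_add_distrib]
      _ = ∑ p, ∑ d, ∑ e, c e * (Q p d * g p * H d e) := by
          rw [key_vanish Q Mm _ (fun a e => by ring) hP, zero_add]
  rw [hR]
  calc (∑ e, c e * (2 * ∑ p, ∑ d, Q p d * g p * H e d))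
      = ∑ e, 2 * ∑ p, ∑ d, c e * (Q p d * g p * H d e) := by
        refine Finset.sum_congr rfl fun e _ => ?_
        simp only [Finset.mul_sum]
        refine Finset.sum_congr rfl fun p _ => Finset.sum_congr rfl fun d _ => ?_
        rw [hH e d]; ring
    _ = 2 * ∑ e, ∑ p, ∑ d, c e * (Q p d * g p * H d e) := by
        exact (Finset.mul_sum _ _ _).symm
    _ = 2 * ∑ p, ∑ d, ∑ e, c e * (Q p d * g p * H d e) := by
        congr 1
        calc ∑ e, ∑ p, ∑ d, c e * (Q p d * g p * H d e)
            = ∑ p, ∑ e, ∑ d, c e * (Q p d * g p * H d e) := Finset.sum_comm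
          _ = ∑ p, ∑ d, ∑ e, c e * (Q p d * g p * H d e) :=
              Finset.sum_congr rfl fun p _ => Finset.sum_comm
/-- If `□_η φ = G(φ, u)` with `u = η^{cd} ∂_c φ ∂_d φ`, and `K` is an affine η-Killing
field, then `ψ := Kφ` satisfies the linear homogeneous wave equation
`□_η ψ = ∂₁G(φ,u) ψ + 2 ∂₂G(φ,u) η^{cd} ∂_c φ ∂_d ψ`. -/
theorem lie_derivative_wave_with_gradient_source {n : ℕ} (hn : 1 ≤ n)
    (η : Matrix (Fin n) (Fin n) ℝ) (hηsym : η.IsSymm) (hηinv : IsUnit η.det)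
    (A : (Fin n → ℝ) →ₗ[ℝ] (Fin n → ℝ)) (b : Fin n → ℝ)
    (hA : ∀ v w : Fin n → ℝ, bform η (A v) w + bform η v (A w) = 0)
    (K : (Fin n → ℝ) → (Fin n → ℝ)) (hKdef : ∀ x, K x = A x + b)
    (G : ℝ → ℝ → ℝ) (hG : ContDiff ℝ (⊤ : ℕ∞) (fun p : ℝ × ℝ => G p.1 p.2))
    (φ : (Fin n → ℝ) → ℝ) (hφ : ContDiff ℝ (⊤ : ℕ∞) φ)
    (u : (Fin n → ℝ) → ℝ)
    (hudef : ∀ x, u x = ∑ c, ∑ d, η⁻¹ c d * pd c φ x * pd d φ x)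
    (hwave : ∀ x, box η φ x = G (φ x) (u x))
    (ψ : (Fin n → ℝ) → ℝ) (hψdef : ∀ x, ψ x = ∑ e, K x e * pd e φ x) :
    ∀ x, box η ψ x =
      fderiv ℝ (fun p : ℝ × ℝ => G p.1 p.2) (φ x, u x) (1, 0) * ψ x
      + 2 * fderiv ℝ (fun p : ℝ × ℝ => G p.1 p.2) (φ x, u x) (0, 1)
          * ∑ c, ∑ d, η⁻¹ c d * pd c φ x * pd d ψ x := by
  -- symmetry of η⁻¹
  have hQsym : ∀ i j, η⁻¹ i j = η⁻¹ j i := by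
    intro i j
    have h : (η⁻¹).transpose = η⁻¹ := by rw [Matrix.transpose_nonsing_inv, hηsym.eq]
    simpa [Matrix.transpose_apply] using (congrFun (congrFun h i) j).symm
  -- antisymmetry of the matrix of A against η⁻¹
  have hMrel : (Matrix.of (fun e d => A (Pi.single d 1) e)).transpose * η
      + η * (Matrix.of (fun e d => A (Pi.single d 1) e)) = 0 := by
    ext p q
    have h0 := hA (Pi.single p 1) (Pi.single q 1)
    simp only [bform, Pi.single_apply, mul_ite, mul_one, mul_zero, ite_mul, one_mul, zero_mul,
      Finset.sum_ite_irrel, Finset.sum_const_zero,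
      Finset.sum_ite_eq', Finset.mem_univ, if_true] at h0
    simp only [Matrix.add_apply, Matrix.mul_apply, Matrix.transpose_apply, Matrix.of_apply,
      Matrix.zero_apply]
    have e1 : ∑ x : Fin n, A (Pi.single p 1) x * η x q
        = ∑ x : Fin n, η x q * A (Pi.single p 1) x :=
      Finset.sum_congr rfl fun x _ => mul_comm _ _
    rw [e1]
    exact h0
  have hP : ∀ i j, (∑ d, η⁻¹ i d * A (Pi.single d 1) j)
      = -(∑ d, η⁻¹ j d * A (Pi.single d 1) i) := by
    intro i j
    have h := key_antisym η (Matrix.of (fun e d => A (Pi.single d 1) e)) hηsym hηinv hMrel i j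
    simpa [Matrix.mul_apply, Matrix.transpose_apply] using h
  -- smoothness
  have hφ1 : ∀ e, ContDiff ℝ (⊤ : ℕ∞) (pd e φ) := fun e => pd_contDiff e hφ
  have hφ2 : ∀ d e, ContDiff ℝ (⊤ : ℕ∞) (pd d (pd e φ)) := fun d e => pd_contDiff d (hφ1 e)
  have hKc : ∀ e, ContDiff ℝ (⊤ : ℕ∞) (fun y => A y e + b e) := fun e => affine_coord_contDiff A b e
  have hufun : u = fun y => ∑ c, ∑ d, η⁻¹ c d * pd c φ y * pd d φ y := funext hudef
  have hterm : ∀ c d : Fin n, ContDiff ℝ (⊤ : ℕ∞) (fun y => η⁻¹ c d * pd c φ y * pd d φ y) :=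
    fun c d => (contDiff_const.mul (hφ1 c)).mul (hφ1 d)
  have hu : ContDiff ℝ (⊤ : ℕ∞) u := by
    rw [hufun]
    exact ContDiff.sum fun c _ => ContDiff.sum fun d _ => hterm c d
  have hψfun : ψ = fun y => ∑ e, (A y e + b e) * pd e φ y := by
    funext y
    rw [hψdef y]
    exact Finset.sum_congr rfl fun e _ => by rw [hKdef y]; rfl
  have hψterm : ∀ e, ContDiff ℝ (⊤ : ℕ∞) (fun y => (A y e + b e) * pd e φ y) :=
    fun e => (hKc e).mul (hφ1 e)
  -- first derivatives of ψ
  have hpdψ : ∀ d y, pd d ψ y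
      = ∑ e, (A (Pi.single d 1) e * pd e φ y + (A y e + b e) * pd d (pd e φ) y) := by
    intro d y
    rw [hψfun, pd_sum d Finset.univ
      (f := fun e => fun y => (A y e + b e) * pd e φ y) (fun e => hψterm e) y]
    refine Finset.sum_congr rfl fun e _ => ?_
    rw [pd_mul d (hKc e) (hφ1 e) y, pd_affine_coord A b d e y]
  have hterm2 : ∀ d e, ContDiff ℝ (⊤ : ℕ∞)
      (fun y => A (Pi.single d 1) e * pd e φ y + (A y e + b e) * pd d (pd e φ) y) :=
    fun d e => (contDiff_const.mul (hφ1 e)).add ((hKc e).mul (hφ2 d e))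
  -- second derivatives of ψ
  have hpd2ψ : ∀ a d y, pd a (pd d ψ) y
      = ∑ e, (A (Pi.single d 1) e * pd a (pd e φ) y
          + A (Pi.single a 1) e * pd d (pd e φ) y
          + (A y e + b e) * pd a (pd d (pd e φ)) y) := by
    intro a d y
    have hfun : pd d ψ = fun y =>
        ∑ e, (A (Pi.single d 1) e * pd e φ y + (A y e + b e) * pd d (pd e φ) y) :=
      funext (hpdψ d)
    rw [hfun, pd_sum a Finset.univ
      (f := fun e => fun y => A (Pi.single d 1) e * pd e φ y + (A y e + b e) * pd d (pd e φ) y)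
      (fun e => hterm2 d e) y]
    refine Finset.sum_congr rfl fun e _ => ?_
    rw [pd_add a (contDiff_const.mul (hφ1 e)) ((hKc e).mul (hφ2 d e)) y,
      pd_const_mul a _ (hφ1 e) y, pd_mul a (hKc e) (hφ2 d e) y, pd_affine_coord A b a e y]
    ring
  intro x
  -- Schwarz
  have hH : ∀ a e, pd a (pd e φ) x = pd e (pd a φ) x := fun a e => pd_swap a e hφ x
  have hswap3 : ∀ a d e, pd a (pd d (pd e φ)) x = pd e (pd a (pd d φ)) x := by
    intro a d e
    have h1 : pd d (pd e φ) = pd e (pd d φ) := funext fun y => pd_swap d e hφ y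
    rw [h1]
    exact pd_swap a e (hφ1 d) x
  -- derivative of the wave equation
  have hGbox : (fun y => ∑ a, ∑ d, η⁻¹ a d * pd a (pd d φ) y) = (fun y => G (φ y) (u y)) :=
    funext fun y => hwave y
  have hboxφ : ∀ e, pd e (fun y => G (φ y) (u y)) x
      = ∑ a, ∑ d, η⁻¹ a d * pd e (pd a (pd d φ)) x := by
    intro e
    rw [← hGbox, pd_sum e Finset.univ
      (f := fun a => fun y => ∑ d, η⁻¹ a d * pd a (pd d φ) y)
      (fun a => ContDiff.sum fun d _ => contDiff_const.mul (hφ2 a d)) x]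
    refine Finset.sum_congr rfl fun a _ => ?_
    rw [pd_sum e Finset.univ
      (f := fun d => fun y => η⁻¹ a d * pd a (pd d φ) y)
      (fun d => contDiff_const.mul (hφ2 a d)) x]
    exact Finset.sum_congr rfl fun d _ => pd_const_mul e _ (hφ2 a d) x
  have hpdG : ∀ e, pd e (fun y => G (φ y) (u y)) x
      = fderiv ℝ (fun p : ℝ × ℝ => G p.1 p.2) (φ x, u x) (1, 0) * pd e φ x
      + fderiv ℝ (fun p : ℝ × ℝ => G p.1 p.2) (φ x, u x) (0, 1) * pd e u x :=
    fun e => pd_comp2 e G hG hφ hu x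
  -- derivative of u
  have hpdu : ∀ e, pd e u x
      = 2 * ∑ p, ∑ d, η⁻¹ p d * pd p φ x * pd e (pd d φ) x := by
    intro e
    rw [hufun, pd_sum e Finset.univ
      (f := fun c => fun y => ∑ d, η⁻¹ c d * pd c φ y * pd d φ y)
      (fun c => ContDiff.sum fun d _ => hterm c d) x]
    have hstep : ∀ c : Fin n, pd e (fun y => ∑ d, η⁻¹ c d * pd c φ y * pd d φ y) x
        = ∑ d, (η⁻¹ c d * pd e (pd c φ) x * pd d φ x
            + η⁻¹ c d * pd c φ x * pd e (pd d φ) x) := by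
      intro c
      rw [pd_sum e Finset.univ
        (f := fun d => fun y => η⁻¹ c d * pd c φ y * pd d φ y)
        (fun d => hterm c d) x]
      refine Finset.sum_congr rfl fun d _ => ?_
      rw [pd_mul e (contDiff_const.mul (hφ1 c)) (hφ1 d) x, pd_const_mul e _ (hφ1 c) x]
    calc ∑ c, pd e (fun y => ∑ d, η⁻¹ c d * pd c φ y * pd d φ y) x
        = ∑ c, ∑ d, (η⁻¹ c d * pd e (pd c φ) x * pd d φ x
            + η⁻¹ c d * pd c φ x * pd e (pd d φ) x) :=
          Finset.sum_congr rfl fun c _ => hstep c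
      _ = 2 * ∑ c, ∑ d, η⁻¹ c d * pd c φ x * pd e (pd d φ) x :=
          algebra3 (fun c d => η⁻¹ c d) (fun d => pd d φ x) (fun c => pd e (pd c φ) x) hQsym
  set D1 := fderiv ℝ (fun p : ℝ × ℝ => G p.1 p.2) (φ x, u x) (1, 0) with hD1
  set D2 := fderiv ℝ (fun p : ℝ × ℝ => G p.1 p.2) (φ x, u x) (0, 1) with hD2
  calc box η ψ x = ∑ a, ∑ d, η⁻¹ a d * pd a (pd d ψ) x := rfl
    _ = ∑ a, ∑ d, η⁻¹ a d * ∑ e, (A (Pi.single d 1) e * pd a (pd e φ) x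
          + A (Pi.single a 1) e * pd d (pd e φ) x
          + (A x e + b e) * pd a (pd d (pd e φ)) x) :=
        Finset.sum_congr rfl fun a _ => Finset.sum_congr rfl fun d _ => by rw [hpd2ψ a d x]
    _ = ∑ e, (A x e + b e) * ∑ a, ∑ d, η⁻¹ a d * pd a (pd d (pd e φ)) x :=
        algebra1 (fun a d => η⁻¹ a d) (fun e d => A (Pi.single d 1) e)
          (fun a e => pd a (pd e φ) x) (fun e => A x e + b e)
          (fun a d e => pd a (pd d (pd e φ)) x) hQsym hH hP
    _ = ∑ e, (A x e + b e) * ∑ a, ∑ d, η⁻¹ a d * pd e (pd a (pd d φ)) x := by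
        refine Finset.sum_congr rfl fun e _ => ?_
        congr 1
        exact Finset.sum_congr rfl fun a _ => Finset.sum_congr rfl fun d _ => by
          rw [hswap3 a d e]
    _ = ∑ e, (A x e + b e) * pd e (fun y => G (φ y) (u y)) x :=
        Finset.sum_congr rfl fun e _ => by rw [hboxφ e]
    _ = ∑ e, (A x e + b e) * (D1 * pd e φ x + D2 * pd e u x) :=
        Finset.sum_congr rfl fun e _ => by rw [hpdG e]
    _ = D1 * ψ x + D2 * ∑ e, (A x e + b e) * pd e u x := by
        have hψx : ψ x = ∑ e, (A x e + b e) * pd e φ x := by rw [hψfun]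
        rw [hψx, Finset.mul_sum, Finset.mul_sum, ← Finset.sum_add_distrib]
        exact Finset.sum_congr rfl fun e _ => by ring
    _ = D1 * ψ x + D2 * ∑ e, (A x e + b e)
          * (2 * ∑ p, ∑ d, η⁻¹ p d * pd p φ x * pd e (pd d φ) x) := by
        congr 1
        congr 1
        exact Finset.sum_congr rfl fun e _ => by rw [hpdu e]
    _ = D1 * ψ x + D2 * (2 * ∑ p, ∑ d, η⁻¹ p d * pd p φ x
          * ∑ e, (A (Pi.single d 1) e * pd e φ x + (A x e + b e) * pd d (pd e φ) x)) := by
        congr 1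
        congr 1
        exact algebra2 (fun p d => η⁻¹ p d) (fun e d => A (Pi.single d 1) e)
          (fun a e => pd a (pd e φ) x) (fun e => A x e + b e) (fun p => pd p φ x) hH hP
    _ = D1 * ψ x + D2 * (2 * ∑ c, ∑ d, η⁻¹ c d * pd c φ x * pd d ψ x) := by
        congr 1
        congr 1
        congr 1
        exact Finset.sum_congr rfl fun c _ => Finset.sum_congr rfl fun d _ => by
          rw [← hpdψ d x]
    _ = D1 * ψ x + 2 * D2 * ∑ c, ∑ d, η⁻¹ c d * pd c φ x * pd d ψ x := by ring
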